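/- arXiv:1804.03982 — 6 statements merged into one kernel-verified Lean document; each statement's English description precedes it below -/
import Mathlib

section
/- Fix nonnegative integers k₁ and k₂. Define S(N) = ∑_{m=0}^{N} binomial(2N+k₁+k₂, 2m+k₁) · binomial(2m+k₁, m) · binomial(2(N−m)+k₂, N−m). Then S satisfies the recurrence S(N+1) = [(2N+k₁+k₂+1)²(2N+k₁+k₂+2)²] / [(N+1)(N+k₁+1)(N+k₂+1)(N+k₁+k₂+1)] · S(N). -/
/-!
Each summand is the multinomial coefficient `(2N+k₁+k₂)! / (m! (m+k₁)! (N-m)! (N-m+k₂)!)`, which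
regroups as `C(2N+k₁+k₂, N) · C(N, m) · C(N+k₁+k₂, m+k₁)`. Vandermonde's identity then gives the
closed form `S(N) = C(2N+k₁+k₂, N) · C(2N+k₁+k₂, N+k₁)`, and the recurrence is the ratio of two
consecutive values of this product of binomial coefficients.
-/

open Finset

namespace Nat

theorem choose_mul_choose_mul_choose_mul_factorial (a b c d : ℕ) :
    (a + b + c + d).choose (a + b) * (a + b).choose a * (c + d).choose c *
        (a ! * b ! * c ! * d !) = (a + b + c + d)! := by
  have h (m n : ℕ) : (m + n).choose m * m ! * n ! = (m + n)! := by
    rw [choose_symm_add, add_choose_mul_factorial_mul_factorial]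
  rw [add_assoc (a + b), ← h (a + b) (c + d), ← h a b, ← h c d]
  ring

theorem choose_mul_choose_mul_choose_comm (a b c d : ℕ) :
    (a + b + c + d).choose (a + b) * (a + b).choose a * (c + d).choose c =
      (a + b + c + d).choose (a + c) * (a + c).choose a * (b + d).choose b := by
  have habcd := choose_mul_choose_mul_choose_mul_factorial a b c d
  have hacbd := choose_mul_choose_mul_choose_mul_factorial a c b d
  rw [add_right_comm a c b] at hacbd
  refine Nat.eq_of_mul_eq_mul_right (m := a ! * b ! * c ! * d !) (by positivity) ?_
  linarith

/-- The extra terms on the left have `n < ij.1`, so `n.choose ij.1` kills them. -/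
theorem sum_antidiagonal_add_choose_mul (n k : ℕ) (f : ℕ → ℕ) :
    ∑ ij ∈ antidiagonal (n + k), n.choose ij.1 * f ij.2 =
      ∑ ij ∈ antidiagonal n, n.choose ij.1 * f (ij.2 + k) := by
  induction k generalizing f with
  | zero => rfl
  | succ k ih =>
    rw [← add_assoc, Finset.Nat.sum_antidiagonal_succ', choose_eq_zero_of_lt (by omega),
      zero_mul, zero_add]
    simp only [ih fun j ↦ f (j + 1), add_assoc]

theorem sum_antidiagonal_choose_mul_choose_add (n m k : ℕ) :
    ∑ ij ∈ antidiagonal n, n.choose ij.1 * m.choose (ij.2 + k) = (n + m).choose (n + k) := by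
  rw [add_choose_eq, sum_antidiagonal_add_choose_mul]

theorem add_add_two_choose_succ_mul (a b : ℕ) :
    (a + b + 2).choose (a + 1) * ((a + 1) * (b + 1)) =
      (a + b + 1) * (a + b + 2) * (a + b).choose a := by
  have h₁ := add_one_mul_choose_eq (a + b + 1) a
  have h₂ := choose_mul_succ_eq (a + b) a
  rw [show a + b + 1 - a = b + 1 by omega] at h₂
  calc (a + b + 2).choose (a + 1) * ((a + 1) * (b + 1))
      = (a + b + 2) * ((a + b + 1).choose a * (b + 1)) := by rw [← mul_assoc, ← h₁]; ring
    _ = _ := by rw [← h₂]; ring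

end Nat

open Nat

theorem sum_range_choose_mul_choose_mul_choose (k₁ k₂ N : ℕ) :
    ∑ m ∈ range (N + 1), (2 * N + k₁ + k₂).choose (2 * m + k₁) * (2 * m + k₁).choose m *
        (2 * (N - m) + k₂).choose (N - m) =
      (2 * N + k₁ + k₂).choose N * (2 * N + k₁ + k₂).choose (N + k₁) := by
  rw [← Finset.Nat.sum_antidiagonal_eq_sum_range_succ fun i j ↦
    (2 * N + k₁ + k₂).choose (2 * i + k₁) * (2 * i + k₁).choose i * (2 * j + k₂).choose j]
  calc _ = ∑ ij ∈ antidiagonal N,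
        (2 * N + k₁ + k₂).choose N * (N.choose ij.2 * (N + k₁ + k₂).choose (ij.1 + k₁)) := by
        refine sum_congr rfl fun ⟨i, j⟩ hij ↦ ?_
        obtain rfl : i + j = N := mem_antidiagonal.mp hij
        have key := choose_mul_choose_mul_choose_comm i (i + k₁) j (j + k₂)
        rw [show i + (i + k₁) + j + (j + k₂) = 2 * (i + j) + k₁ + k₂ by ring,
          show i + (i + k₁) = 2 * i + k₁ by ring, show j + (j + k₂) = 2 * j + k₂ by ring,
          show i + k₁ + (j + k₂) = i + j + k₁ + k₂ by ring, choose_symm_add] at key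
        rw [key, mul_assoc]
    _ = _ := by
      rw [← mul_sum, ← sum_antidiagonal_swap]
      simp only [Prod.fst_swap, Prod.snd_swap]
      rw [sum_antidiagonal_choose_mul_choose_add, show N + (N + k₁ + k₂) = 2 * N + k₁ + k₂ by ring]

theorem choose_mul_choose_succ_eq (k₁ k₂ N : ℕ) :
    ((2 * (N + 1) + k₁ + k₂).choose (N + 1) * (2 * (N + 1) + k₁ + k₂).choose (N + 1 + k₁) : ℚ) =
      ((2 * N + k₁ + k₂ + 1 : ℚ) ^ 2 * (2 * N + k₁ + k₂ + 2 : ℚ) ^ 2) /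
          ((N + 1 : ℚ) * (N + k₁ + 1 : ℚ) * (N + k₂ + 1 : ℚ) * (N + k₁ + k₂ + 1 : ℚ)) *
        ((2 * N + k₁ + k₂).choose N * (2 * N + k₁ + k₂).choose (N + k₁)) := by
  have h₁ := add_add_two_choose_succ_mul N (N + k₁ + k₂)
  have h₂ := add_add_two_choose_succ_mul (N + k₁) (N + k₂)
  rw [show N + (N + k₁ + k₂) + 2 = 2 * (N + 1) + k₁ + k₂ by ring,
    show N + (N + k₁ + k₂) = 2 * N + k₁ + k₂ by ring] at h₁
  rw [show N + k₁ + (N + k₂) + 2 = 2 * (N + 1) + k₁ + k₂ by ring,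
    show N + k₁ + (N + k₂) = 2 * N + k₁ + k₂ by ring, add_right_comm N k₁ 1] at h₂
  qify at h₁ h₂
  rw [eq_div_of_mul_eq (by positivity) h₁, eq_div_of_mul_eq (by positivity) h₂]
  field_simp
  ring

theorem binom_sum_recurrence (k₁ k₂ : ℕ) (N : ℕ) :
    (∑ m ∈ Finset.range (N + 1 + 1),
        ((2 * (N + 1) + k₁ + k₂).choose (2 * m + k₁) *
          (2 * m + k₁).choose m * (2 * ((N + 1) - m) + k₂).choose ((N + 1) - m) : ℚ)) =
      ((2 * N + k₁ + k₂ + 1 : ℚ) ^ 2 * (2 * N + k₁ + k₂ + 2 : ℚ) ^ 2) /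
          ((N + 1 : ℚ) * (N + k₁ + 1 : ℚ) * (N + k₂ + 1 : ℚ) * (N + k₁ + k₂ + 1 : ℚ)) *
        (∑ m ∈ Finset.range (N + 1),
          ((2 * N + k₁ + k₂).choose (2 * m + k₁) *
            (2 * m + k₁).choose m * (2 * (N - m) + k₂).choose (N - m) : ℚ)) := by
  simp only [← Nat.cast_mul, ← Nat.cast_sum, sum_range_choose_mul_choose_mul_choose]
  push_cast
  exact choose_mul_choose_succ_eq k₁ k₂ N
end

section
/- Let k₁, k₂ be nonnegative integers and N a nonnegative integer, and set l = 2N + k₁ + k₂. Then ∫₀^π ∫₀^π (cos θ₁ + cos θ₂)^l cos(k₁θ₁) cos(k₂θ₂) dθ₁ dθ₂ = binomial(k₁+k₂, k₁) · (π²/2^l) · (k₁+k₂+1)_{2N}² / [(k₁+1)_N (k₂+1)_N (k₁+k₂+1)_N N!]. -/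
/-!
Expanding `(cos θ₁ + cos θ₂) ^ l` binomially splits the double integral into products of the
moments `∫₀^π cos^m θ cos (kθ) dθ`. The identity
`cos θ cos ((k+1)θ) = (cos ((k+2)θ) + cos (kθ)) / 2` turns them into Pascal's recursion, so they
equal `π / 2^m · C(m, (m-k)/2)` when `m - k` is even and nonnegative, and `0` otherwise.
Only the exponents `j = k₁ + 2a` of `cos θ₁` with `a ≤ N` survive, and the remaining sum
`∑ₐ C(l, k₁+2a) C(k₁+2a, a) C(k₂+2(N-a), N-a)` has terms `C(l, N) C(N, a) C(k₁+k₂+N, k₁+a)`,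
so by Vandermonde it equals `C(l, N) C(l, k₁+N)`, which is the Pochhammer expression.
-/

/-- The rising factorial (Pochhammer symbol) over ℝ. -/
noncomputable def rising (a : ℝ) (n : ℕ) : ℝ := (ascPochhammer ℝ n).eval a

open Real intervalIntegral Finset
open scoped Nat

lemma integral_cos_natCast_mul (k : ℕ) :
    ∫ θ in (0:ℝ)..π, cos (k * θ) = if k = 0 then π else 0 := by
  rcases Nat.eq_zero_or_pos k with rfl | hk
  · simp
  · have hk' : (k : ℝ) ≠ 0 := by positivity
    rw [if_neg hk.ne', integral_comp_mul_left (fun x => cos x) hk', mul_zero, integral_cos]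
    simp [sin_nat_mul_pi]

noncomputable def cosMoment (m k : ℕ) : ℝ := ∫ θ in (0:ℝ)..π, cos θ ^ m * cos (k * θ)

lemma cosMoment_zero_left (k : ℕ) : cosMoment 0 k = if k = 0 then π else 0 := by
  simpa [cosMoment] using integral_cos_natCast_mul k

lemma cosMoment_succ_zero (m : ℕ) : cosMoment (m + 1) 0 = cosMoment m 1 := by
  simp [cosMoment, pow_succ]

lemma cosMoment_succ_succ (m k : ℕ) :
    cosMoment (m + 1) (k + 1) = (cosMoment m (k + 2) + cosMoment m k) / 2 := by
  have product_to_sum (θ : ℝ) : cos θ ^ (m + 1) * cos ((k + 1 : ℕ) * θ) =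
      (cos θ ^ m * cos ((k + 2 : ℕ) * θ) + cos θ ^ m * cos (k * θ)) / 2 := by
    have h := cos_add_cos ((k + 2 : ℕ) * θ) (k * θ)
    push_cast at h ⊢
    rw [show ((k + 2) * θ + k * θ) / 2 = (k + 1) * θ by ring,
      show ((k + 2) * θ - k * θ) / 2 = θ by ring] at h
    rw [← mul_add, h]
    ring
  have hint (j : ℕ) :
      IntervalIntegrable (fun θ => cos θ ^ m * cos (j * θ)) MeasureTheory.volume 0 π :=
    (by fun_prop : Continuous _).intervalIntegrable _ _
  simp only [cosMoment, product_to_sum, integral_div, integral_add (hint _) (hint _)]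

lemma cosMoment_eq (m k : ℕ) : cosMoment m k =
    if k ≤ m ∧ (m - k) % 2 = 0 then π / 2 ^ m * (m.choose ((m - k) / 2) : ℝ) else 0 := by
  induction m generalizing k with
  | zero =>
    rw [cosMoment_zero_left]
    rcases Nat.eq_zero_or_pos k with rfl | hk
    · simp
    · rw [if_neg hk.ne', if_neg (by omega)]
  | succ m ih =>
    cases k with
    | zero =>
      rw [cosMoment_succ_zero, ih 1]
      by_cases hm : 1 ≤ m ∧ (m - 1) % 2 = 0
      · obtain ⟨t, rfl⟩ : ∃ t, m = 2 * t + 1 := ⟨(m - 1) / 2, by omega⟩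
        rw [if_pos hm, if_pos (by omega), show (2 * t + 1 - 1) / 2 = t by omega,
          show (2 * t + 1 + 1 - 0) / 2 = t + 1 by omega, Nat.choose_succ_succ',
          Nat.choose_symm_half]
        push_cast
        ring
      · rw [if_neg hm, if_neg (by omega)]
    | succ k =>
      rw [cosMoment_succ_succ, ih (k + 2), ih k]
      by_cases hparity : k ≤ m ∧ (m - k) % 2 = 0
      · by_cases hlt : k + 2 ≤ m
        · obtain ⟨s, rfl⟩ : ∃ s, m = k + 2 * s + 2 := ⟨(m - k - 2) / 2, by omega⟩
          rw [if_pos (by omega), if_pos (by omega), if_pos (by omega),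
            show (k + 2 * s + 2 - (k + 2)) / 2 = s by omega,
            show (k + 2 * s + 2 - k) / 2 = s + 1 by omega,
            show (k + 2 * s + 2 + 1 - (k + 1)) / 2 = s + 1 by omega,
            Nat.choose_succ_succ' (k + 2 * s + 2) s]
          push_cast
          ring
        · obtain rfl : k = m := by omega
          rw [if_neg (by omega), if_pos (by omega), if_pos (by omega), Nat.sub_self,
            show (k + 1 - (k + 1)) / 2 = 0 by omega]
          simp only [Nat.zero_div, Nat.choose_zero_right]
          push_cast
          ring
      · rw [if_neg (by omega), if_neg (by omega), if_neg (by omega)]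
        norm_num

lemma integral_add_cos_pow_mul_cos (k l : ℕ) (c A : ℝ) :
    ∫ θ in (0:ℝ)..π, (c + cos θ) ^ l * A * cos (k * θ)
      = ∑ j ∈ range (l + 1), (l.choose j : ℝ) * c ^ j * A * cosMoment (l - j) k := by
  have expand (θ : ℝ) : (c + cos θ) ^ l * A * cos (k * θ) = ∑ j ∈ range (l + 1),
      (l.choose j : ℝ) * c ^ j * A * (cos θ ^ (l - j) * cos (k * θ)) := by
    rw [add_pow, sum_mul, sum_mul]
    exact sum_congr rfl fun j _ => by ring
  simp only [expand]
  rw [integral_finsetSum fun j _ => (by fun_prop : Continuous _).intervalIntegrable _ _]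
  exact sum_congr rfl fun j _ => integral_const_mul _ _

lemma integral_integral_cos_add_cos_pow (k₁ k₂ l : ℕ) :
    ∫ θ₁ in (0:ℝ)..π, ∫ θ₂ in (0:ℝ)..π,
        (cos θ₁ + cos θ₂) ^ l * cos (k₁ * θ₁) * cos (k₂ * θ₂)
      = ∑ j ∈ range (l + 1), (l.choose j : ℝ) * cosMoment j k₁ * cosMoment (l - j) k₂ := by
  have inner (θ₁ : ℝ) : ∫ θ₂ in (0:ℝ)..π,
        (cos θ₁ + cos θ₂) ^ l * cos (k₁ * θ₁) * cos (k₂ * θ₂)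
      = ∑ j ∈ range (l + 1),
          (l.choose j * cosMoment (l - j) k₂) * (cos θ₁ ^ j * cos (k₁ * θ₁)) := by
    rw [integral_add_cos_pow_mul_cos]
    exact sum_congr rfl fun j _ => by ring
  simp only [inner]
  rw [integral_finsetSum fun j _ => (by fun_prop : Continuous _).intervalIntegrable _ _]
  refine sum_congr rfl fun j _ => ?_
  rw [integral_const_mul]
  change _ * cosMoment j k₁ = _
  ring

lemma sum_choose_mul_cosMoment (k₁ k₂ N : ℕ) :
    ∑ j ∈ range (2 * N + k₁ + k₂ + 1),
        ((2 * N + k₁ + k₂).choose j : ℝ) * cosMoment j k₁ * cosMoment (2 * N + k₁ + k₂ - j) k₂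
      = π ^ 2 / 2 ^ (2 * N + k₁ + k₂) * ∑ a ∈ range (N + 1),
          ((2 * N + k₁ + k₂).choose (k₁ + 2 * a) * (k₁ + 2 * a).choose a
            * (k₂ + 2 * (N - a)).choose (N - a) : ℕ) := by
  set l := 2 * N + k₁ + k₂
  set f : ℕ → ℝ := fun j => l.choose j * cosMoment j k₁ * cosMoment (l - j) k₂ with hf
  have hsub : (range (N + 1)).image (fun a => k₁ + 2 * a) ⊆ range (l + 1) := by
    intro j hj
    obtain ⟨a, ha, rfl⟩ := mem_image.mp hj
    simp only [mem_range] at ha ⊢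
    omega
  have hzero (j : ℕ) (hj : j ∈ range (l + 1))
      (hj' : j ∉ (range (N + 1)).image (fun a => k₁ + 2 * a)) : f j = 0 := by
    simp only [mem_range] at hj
    by_cases hk : k₁ ≤ j ∧ (j - k₁) % 2 = 0
    · have : ¬ (j - k₁) / 2 ≤ N := fun h =>
        hj' (mem_image.mpr ⟨(j - k₁) / 2, mem_range.mpr (by omega), by omega⟩)
      simp only [hf]
      rw [cosMoment_eq (l - j) k₂, if_neg (by omega), mul_zero]
    · simp only [hf, cosMoment_eq j k₁, if_neg hk, mul_zero, zero_mul]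
  rw [← sum_subset hsub hzero, sum_image fun a _ b _ h => by omega, Nat.cast_sum, mul_sum]
  refine sum_congr rfl fun a ha => ?_
  simp only [mem_range] at ha
  simp only [hf]
  rw [show l - (k₁ + 2 * a) = k₂ + 2 * (N - a) by omega, cosMoment_eq, cosMoment_eq,
    if_pos (by omega), if_pos (by omega), show (k₁ + 2 * a - k₁) / 2 = a by omega,
    show (k₂ + 2 * (N - a) - k₂) / 2 = N - a by omega]
  have hpow : (2 : ℝ) ^ (k₁ + 2 * a) * 2 ^ (k₂ + 2 * (N - a)) = 2 ^ l := by
    rw [← pow_add]; congr 1; omega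
  push_cast
  field_simp
  rw [← hpow]
  ring

lemma sum_range_choose_mul_choose_add (k N M : ℕ) :
    ∑ a ∈ range (N + 1), N.choose a * M.choose (k + a) = (N + M).choose (k + N) := by
  rw [Nat.add_choose_eq, Nat.sum_antidiagonal_eq_sum_range_succ_mk,
    show (k + N).succ = (N + 1) + k by omega, sum_range_add _ (N + 1) k]
  dsimp only
  have htail : ∀ i ∈ range k, N.choose (N + 1 + i) * M.choose (k + N - (N + 1 + i)) = 0 :=
    fun i _ => by rw [Nat.choose_eq_zero_of_lt (by omega), zero_mul]
  rw [sum_congr rfl htail, sum_const_zero, add_zero, ← sum_range_reflect]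
  refine sum_congr rfl fun a ha => ?_
  rw [mem_range] at ha
  rw [Nat.add_sub_cancel, Nat.choose_symm (by omega), show k + (N - a) = k + N - a by omega]

lemma cast_choose_eq_factorial_div (K : Type*) [DivisionRing K] [CharZero K] {n k m : ℕ}
    (h : k ≤ n) (hm : n - k = m) : (n.choose k : K) = n ! / (k ! * m !) :=
  hm ▸ Nat.cast_choose K h

lemma choose_mul_choose_mul_choose_eq (k₁ k₂ a b : ℕ) :
    (2 * (a + b) + k₁ + k₂).choose (k₁ + 2 * a) * (k₁ + 2 * a).choose a * (k₂ + 2 * b).choose b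
      = (2 * (a + b) + k₁ + k₂).choose (a + b) *
          ((a + b).choose a * (k₁ + k₂ + (a + b)).choose (k₁ + a)) := by
  apply Nat.cast_injective (R := ℝ)
  push_cast
  rw [cast_choose_eq_factorial_div ℝ (k := k₁ + 2 * a) (m := k₂ + 2 * b) (by omega) (by omega),
    cast_choose_eq_factorial_div ℝ (k := a) (m := k₁ + a) (by omega) (by omega),
    cast_choose_eq_factorial_div ℝ (k := b) (m := k₂ + b) (by omega) (by omega),
    cast_choose_eq_factorial_div ℝ (k := a + b) (m := k₁ + k₂ + (a + b)) (by omega) (by omega),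
    cast_choose_eq_factorial_div ℝ (k := a) (m := b) (by omega) (by omega),
    cast_choose_eq_factorial_div ℝ (k := k₁ + a) (m := k₂ + b) (by omega) (by omega)]
  field_simp

lemma sum_choose_mul_choose_mul_choose (k₁ k₂ N : ℕ) :
    ∑ a ∈ range (N + 1), (2 * N + k₁ + k₂).choose (k₁ + 2 * a) * (k₁ + 2 * a).choose a
        * (k₂ + 2 * (N - a)).choose (N - a)
      = (2 * N + k₁ + k₂).choose N * (2 * N + k₁ + k₂).choose (k₁ + N) := by
  conv_rhs => rw [show 2 * N + k₁ + k₂ = N + (k₁ + k₂ + N) by omega,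
    ← sum_range_choose_mul_choose_add, mul_sum]
  refine sum_congr rfl fun a ha => ?_
  rw [mem_range] at ha
  rw [show N + (k₁ + k₂ + N) = 2 * N + k₁ + k₂ by omega]
  have h := choose_mul_choose_mul_choose_eq k₁ k₂ a (N - a)
  rwa [show a + (N - a) = N by omega] at h

lemma rising_natCast_add_one (K n : ℕ) : rising (K + 1) n = (K + n)! / K ! := by
  rw [rising, show (K : ℝ) + 1 = ((K + 1 : ℕ) : ℝ) by push_cast; ring, ← ascPochhammer_eval_cast,
    ascPochhammer_nat_eq_ascFactorial, eq_div_iff (by positivity), ← Nat.cast_mul, mul_comm,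
    Nat.factorial_mul_ascFactorial]

theorem A_l_value (k₁ k₂ N : ℕ) :
    (∫ θ₁ in (0:ℝ)..π, ∫ θ₂ in (0:ℝ)..π,
        (Real.cos θ₁ + Real.cos θ₂) ^ (2 * N + k₁ + k₂) *
          Real.cos (k₁ * θ₁) * Real.cos (k₂ * θ₂)) =
      ((k₁ + k₂).choose k₁ : ℝ) * (π ^ 2 / 2 ^ (2 * N + k₁ + k₂)) *
        (rising (k₁ + k₂ + 1) (2 * N)) ^ 2 /
          (rising (k₁ + 1) N * rising (k₂ + 1) N * rising (k₁ + k₂ + 1) N *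
            (Nat.factorial N : ℝ)) := by
  rw [integral_integral_cos_add_cos_pow, sum_choose_mul_cosMoment,
    sum_choose_mul_choose_mul_choose]
  have h₁₂ := rising_natCast_add_one (k₁ + k₂)
  push_cast at h₁₂
  rw [h₁₂, h₁₂, rising_natCast_add_one, rising_natCast_add_one, Nat.cast_mul,
    cast_choose_eq_factorial_div ℝ (n := k₁ + k₂) (k := k₁) (m := k₂) (by omega) (by omega),
    cast_choose_eq_factorial_div ℝ (k := N) (m := k₁ + k₂ + N) (by omega) (by omega),
    cast_choose_eq_factorial_div ℝ (k := k₁ + N) (m := k₂ + N) (by omega) (by omega),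
    show k₁ + k₂ + 2 * N = 2 * N + k₁ + k₂ by omega]
  field_simp
end

section
/- For 0 ≤ x < 1 and a nonnegative integer k, the function Ξ₁^{[k]}(x) has the power series expansion Ξ₁^{[k]}(x) = (1/2) ∑_{m=0}^∞ (1/2)_m (1/2)_{m+k} / (m! (m+k)!) · x^{2m+k}. -/
open Real

/-- The rank-1 Melnikov function Ξ₁^{[k]}. -/
noncomputable def Xi1 (k : ℕ) (x : ℝ) : ℝ :=
  (1 / (2 * π)) * ∫ θ in (0:ℝ)..π, Real.cos (k * θ) / Real.sqrt (1 + x ^ 2 - 2 * x * Real.cos θ)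

/-! The numbers `a n = (1/2)_n / n!` (`invSqrtCoeff`) are the coefficients of the binomial series
`∑ a n w ^ n = (1 - w) ^ (-1/2)`, `‖w‖ < 1`. Multiplying this series at `w = x e^{iθ}` by its
complex conjugate and taking real parts,
`1 / √(1 + x² - 2 x cos θ) = |1 - w|⁻¹ = ∑_{p,q} a p a q x^(p+q) cos ((p - q) θ)`, with a bound
uniform in `θ`. Integrating term by term against `cos (k θ)` over `[0, π]`, orthogonality keeps
exactly the pairs with `|p - q| = k`, each with weight `π / 2`. -/

open ComplexConjugate

noncomputable def invSqrtCoeff (n : ℕ) : ℝ := rising (1 / 2) n / n.factorial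

lemma invSqrtCoeff_succ (n : ℕ) :
    invSqrtCoeff (n + 1) = invSqrtCoeff n * ((1 / 2 + n) / (n + 1)) := by
  rw [invSqrtCoeff, invSqrtCoeff, rising, rising, ascPochhammer_succ_eval, Nat.factorial_succ]
  push_cast
  field_simp

lemma invSqrtCoeff_nonneg (n : ℕ) : 0 ≤ invSqrtCoeff n := by
  induction n with
  | zero => simp [invSqrtCoeff, rising]
  | succ n ih => rw [invSqrtCoeff_succ]; positivity

lemma invSqrtCoeff_le_one (n : ℕ) : invSqrtCoeff n ≤ 1 := by
  induction n with
  | zero => simp [invSqrtCoeff, rising]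
  | succ n ih =>
    rw [invSqrtCoeff_succ]
    have hq : (1 / 2 + n : ℝ) / (n + 1) ≤ 1 := by rw [div_le_one (by positivity)]; linarith
    exact mul_le_one₀ ih (by positivity) hq

lemma summable_norm_invSqrtCoeff_smul_pow {𝕜 : Type*} [NormedDivisionRing 𝕜] [NormedAlgebra ℝ 𝕜]
    {w : 𝕜} (hw : ‖w‖ < 1) : Summable fun n => ‖invSqrtCoeff n • w ^ n‖ := by
  refine .of_nonneg_of_le (fun n => norm_nonneg _) (fun n => ?_)
    (summable_geometric_of_lt_one (norm_nonneg w) hw)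
  rw [norm_smul, norm_pow, Real.norm_of_nonneg (invSqrtCoeff_nonneg n)]
  exact mul_le_of_le_one_left (by positivity) (invSqrtCoeff_le_one n)

lemma summable_norm_invSqrtCoeff_mul_pow {x : ℝ} (hx : |x| < 1) :
    Summable fun n => ‖invSqrtCoeff n * x ^ n‖ := by
  simpa only [smul_eq_mul] using
    summable_norm_invSqrtCoeff_smul_pow (w := x) (by rwa [Real.norm_eq_abs])

lemma choose_eq_invSqrtCoeff (n : ℕ) :
    Ring.choose ((1 / 2 : ℂ) + n - 1) n = (invSqrtCoeff n : ℂ) := by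
  have hn : (n.factorial : ℂ) ≠ 0 := Nat.cast_ne_zero.2 n.factorial_ne_zero
  rw [← Ring.multichoose_eq, invSqrtCoeff, rising, Complex.ofReal_div, Complex.ofReal_natCast,
    eq_div_iff hn, mul_comm, ← nsmul_eq_mul, Ring.factorial_nsmul_multichoose_eq_ascPochhammer,
    Polynomial.ascPochhammer_smeval_eq_eval, ← Complex.coe_algebraMap,
    ← Polynomial.aeval_algebraMap_apply_eq_algebraMap_eval]
  simp [Polynomial.aeval_def, Polynomial.eval₂_eq_eval_map, ascPochhammer_map]

lemma hasSum_invSqrtCoeff_mul_pow {w : ℂ} (hw : ‖w‖ < 1) :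
    HasSum (fun n => (invSqrtCoeff n : ℂ) * w ^ n) (1 / (1 - w) ^ (1 / 2 : ℂ)) := by
  have h := (Complex.one_div_one_sub_cpow_hasFPowerSeriesOnBall_zero (1 / 2)).hasSum
    (y := w) (by simpa [enorm_eq_nnnorm, ← NNReal.coe_lt_one] using hw)
  simpa only [FormalMultilinearSeries.ofScalars_apply_eq, smul_eq_mul, zero_add,
    choose_eq_invSqrtCoeff] using h

lemma norm_one_div_cpow_half_sq (z : ℂ) : ‖1 / z ^ (1 / 2 : ℂ)‖ ^ 2 = 1 / ‖z‖ := by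
  have h : (1 / 2 : ℂ) = ((1 / 2 : ℝ) : ℂ) := by norm_num
  rw [h, norm_div, norm_one, Complex.norm_cpow_real, ← Real.sqrt_eq_rpow, div_pow,
    Real.sq_sqrt (norm_nonneg z), one_pow]

lemma hasSum_re_mul_conj {ι : Type*} {g : ι → ℂ} {z : ℂ} (hg : HasSum g z)
    (hs : Summable fun i => ‖g i‖) :
    HasSum (fun p : ι × ι => (g p.1 * conj (g p.2)).re) (‖z‖ ^ 2) := by
  have hconj : HasSum (fun i => conj (g i)) (conj z) := Complex.hasSum_conj'.2 hg
  have hs' : Summable fun i => ‖conj (g i)‖ := by simpa only [Complex.norm_conj] using hs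
  have h := Complex.hasSum_re <| hg.mul hconj <|
    summable_mul_of_summable_norm (f := g) (g := fun i => conj (g i)) hs hs'
  rwa [Complex.mul_conj, Complex.ofReal_re, Complex.normSq_eq_norm_sq] at h

lemma re_mul_exp_mul_conj (r s α β : ℝ) :
    ((r * Complex.exp (α * Complex.I)) * conj (s * Complex.exp (β * Complex.I))).re
      = r * s * Real.cos (α - β) := by
  rw [map_mul, Complex.conj_ofReal, ← Complex.exp_conj, map_mul, Complex.conj_ofReal,
    Complex.conj_I, mul_mul_mul_comm, ← Complex.exp_add, mul_neg, ← sub_eq_add_neg, ← sub_mul,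
    ← Complex.ofReal_mul, ← Complex.ofReal_sub, Complex.re_ofReal_mul, Complex.exp_ofReal_mul_I_re]

lemma norm_one_sub_mul_exp_sq (x θ : ℝ) :
    ‖1 - x * Complex.exp (θ * Complex.I)‖ ^ 2 = 1 + x ^ 2 - 2 * x * Real.cos θ := by
  rw [Complex.sq_norm, Complex.normSq_apply]
  simp only [Complex.sub_re, Complex.sub_im, Complex.one_re, Complex.one_im,
    Complex.re_ofReal_mul, Complex.im_ofReal_mul, Complex.exp_ofReal_mul_I_re,
    Complex.exp_ofReal_mul_I_im]
  nlinarith [Real.sin_sq_add_cos_sq θ]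

lemma hasSum_one_div_sqrt_one_add_sq_sub {x : ℝ} (hx : |x| < 1) (θ : ℝ) :
    HasSum (fun p : ℕ × ℕ => invSqrtCoeff p.1 * x ^ p.1 * (invSqrtCoeff p.2 * x ^ p.2) *
      Real.cos (p.1 * θ - p.2 * θ)) (1 / √(1 + x ^ 2 - 2 * x * Real.cos θ)) := by
  set w : ℂ := x * Complex.exp (θ * Complex.I)
  have hw : ‖w‖ < 1 := by
    rwa [norm_mul, Complex.norm_exp_ofReal_mul_I, mul_one, Complex.norm_real, Real.norm_eq_abs]
  have hs : Summable fun n => ‖(invSqrtCoeff n : ℂ) * w ^ n‖ := by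
    simpa only [Complex.real_smul] using summable_norm_invSqrtCoeff_smul_pow hw
  have hterm (n : ℕ) : (invSqrtCoeff n : ℂ) * w ^ n
      = ((invSqrtCoeff n * x ^ n : ℝ) : ℂ) * Complex.exp ((n * θ : ℝ) * Complex.I) := by
    rw [mul_pow, ← Complex.exp_nat_mul]
    push_cast
    ring_nf
  have h := hasSum_re_mul_conj (hasSum_invSqrtCoeff_mul_pow hw) hs
  rw [norm_one_div_cpow_half_sq, ← Real.sqrt_sq (norm_nonneg _), norm_one_sub_mul_exp_sq] at h
  simpa only [hterm, re_mul_exp_mul_conj] using h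

lemma integral_cos_int_mul (n : ℤ) :
    ∫ θ in (0 : ℝ)..π, Real.cos (n * θ) = if n = 0 then π else 0 := by
  split_ifs with h
  · simp [h]
  · have hn : (n : ℝ) ≠ 0 := Int.cast_ne_zero.2 h
    rw [intervalIntegral.integral_comp_mul_left Real.cos hn, mul_zero, integral_cos,
      Real.sin_int_mul_pi, Real.sin_zero, sub_zero, smul_zero]

lemma integral_cos_int_mul_mul_cos_int_mul (m n : ℤ) :
    ∫ θ in (0 : ℝ)..π, Real.cos (m * θ) * Real.cos (n * θ)
      = (if m = n then π / 2 else 0) + (if m = -n then π / 2 else 0) := by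
  have hprod (θ : ℝ) : Real.cos (m * θ) * Real.cos (n * θ)
      = Real.cos ((m - n : ℤ) * θ) / 2 + Real.cos ((m + n : ℤ) * θ) / 2 := by
    push_cast
    rw [sub_mul, add_mul]
    linarith [Real.two_mul_cos_mul_cos (m * θ) (n * θ)]
  have hint (j : ℤ) :
      IntervalIntegrable (fun θ : ℝ => Real.cos (j * θ) / 2) MeasureTheory.volume 0 π :=
    (by fun_prop : Continuous fun θ : ℝ => Real.cos (j * θ) / 2).intervalIntegrable 0 π
  simp_rw [hprod]
  rw [intervalIntegral.integral_add (hint _) (hint _), intervalIntegral.integral_div,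
    intervalIntegral.integral_div, integral_cos_int_mul, integral_cos_int_mul]
  simp only [sub_eq_zero, add_eq_zero_iff_eq_neg, ite_div, zero_div]

lemma integral_cos_mul_cos_sub (k p q : ℕ) :
    ∫ θ in (0 : ℝ)..π, Real.cos (k * θ) * Real.cos (p * θ - q * θ)
      = (if p = q + k then π / 2 else 0) + (if q = p + k then π / 2 else 0) := by
  have h := integral_cos_int_mul_mul_cos_int_mul k (p - q)
  push_cast at h
  simp_rw [← sub_mul]
  rw [h]
  congr 1 <;> exact if_congr (by omega) rfl rfl

lemma hasSum_integral_cos_mul_div_sqrt {x : ℝ} (hx : |x| < 1) (k : ℕ) :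
    HasSum (fun p : ℕ × ℕ => invSqrtCoeff p.1 * x ^ p.1 * (invSqrtCoeff p.2 * x ^ p.2) *
        ((if p.1 = p.2 + k then π / 2 else 0) + (if p.2 = p.1 + k then π / 2 else 0)))
      (∫ θ in (0 : ℝ)..π, Real.cos (k * θ) / √(1 + x ^ 2 - 2 * x * Real.cos θ)) := by
  set u : ℕ → ℝ := fun n => invSqrtCoeff n * x ^ n
  have hu : Summable fun n => ‖u n‖ := summable_norm_invSqrtCoeff_mul_pow hx
  have hlim := intervalIntegral.hasSum_integral_of_dominated_convergence (a := 0) (b := π)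
    (μ := MeasureTheory.volume)
    (F := fun (p : ℕ × ℕ) θ => Real.cos (k * θ) * (u p.1 * u p.2 * Real.cos (p.1 * θ - p.2 * θ)))
    (fun p _ => ‖u p.1‖ * ‖u p.2‖)
    (fun p => (by fun_prop : Continuous _).aestronglyMeasurable)
    (fun p => .of_forall fun θ _ => by
      simp only [norm_mul, Real.norm_eq_abs]
      calc |Real.cos (k * θ)| * (|u p.1| * |u p.2| * |Real.cos (p.1 * θ - p.2 * θ)|)
          ≤ 1 * (|u p.1| * |u p.2| * 1) := by gcongr <;> exact Real.abs_cos_le_one _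
        _ = |u p.1| * |u p.2| := by ring)
    (.of_forall fun _ _ => by simpa only [norm_mul] using hu.mul_norm hu) intervalIntegrable_const
    (.of_forall fun θ _ => by
      simpa only [mul_one_div] using
        (hasSum_one_div_sqrt_one_add_sq_sub hx θ).mul_left (Real.cos (k * θ)))
  refine hlim.congr_fun fun p => ?_
  simp_rw [mul_left_comm (Real.cos (k * _)) (u p.1 * u p.2)]
  rw [intervalIntegral.integral_const_mul, integral_cos_mul_cos_sub]

lemma hasSum_ite_fst_eq_snd_add_iff {α : Type*} [AddCommMonoid α] [TopologicalSpace α]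
    (f : ℕ × ℕ → α) (k : ℕ) {s : α} :
    HasSum (fun p : ℕ × ℕ => if p.1 = p.2 + k then f p else 0) s ↔
      HasSum (fun m => f (m + k, m)) s := by
  have hinj : Function.Injective fun m : ℕ => (m + k, m) := fun a b h => (Prod.ext_iff.1 h).2
  rw [← hinj.hasSum_iff]
  · simp [Function.comp_def]
  · rintro ⟨p, q⟩ hpq
    rw [if_neg]
    intro h
    exact hpq ⟨q, Prod.ext h.symm rfl⟩

lemma hasSum_mul_mul_ite_add_ite {u : ℕ → ℝ} (hu : Summable fun n => ‖u n‖) (k : ℕ) (c : ℝ) :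
    HasSum (fun p : ℕ × ℕ => u p.1 * u p.2 *
        ((if p.1 = p.2 + k then c else 0) + (if p.2 = p.1 + k then c else 0)))
      (2 * c * ∑' m, u m * u (m + k)) := by
  have hdiag : HasSum (fun m => c * (u m * u (m + k))) (c * ∑' m, u m * u (m + k)) := by
    have hinj : Function.Injective fun m : ℕ => (m, m + k) := fun a b h => (Prod.ext_iff.1 h).1
    exact ((summable_mul_of_summable_norm hu hu).comp_injective hinj).hasSum.mul_left c
  have h₁ : HasSum (fun p : ℕ × ℕ => if p.1 = p.2 + k then c * (u p.1 * u p.2) else 0)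
      (c * ∑' m, u m * u (m + k)) :=
    (hasSum_ite_fst_eq_snd_add_iff (fun p => c * (u p.1 * u p.2)) k).2 <| by
      convert hdiag using 2
      ring
  have h₂ : HasSum (fun p : ℕ × ℕ => if p.2 = p.1 + k then c * (u p.1 * u p.2) else 0)
      (c * ∑' m, u m * u (m + k)) := by
    rw [← (Equiv.prodComm ℕ ℕ).hasSum_iff]
    exact (hasSum_ite_fst_eq_snd_add_iff (fun p => c * (u p.2 * u p.1)) k).2 hdiag
  convert h₁.add h₂ using 1
  · ext p
    split_ifs <;> ring
  · ring

theorem Xi1_series (k : ℕ) (x : ℝ) (hx0 : 0 ≤ x) (hx1 : x < 1) :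
    Xi1 k x = (1 / 2) * ∑' m : ℕ,
      rising (1 / 2) m * rising (1 / 2) (m + k) /
        ((m.factorial : ℝ) * ((m + k).factorial : ℝ)) * x ^ (2 * m + k) := by
  have hx : |x| < 1 := abs_lt.2 ⟨by linarith, hx1⟩
  rw [Xi1, (hasSum_integral_cos_mul_div_sqrt hx k).unique
    (hasSum_mul_mul_ite_add_ite (summable_norm_invSqrtCoeff_mul_pow hx) k (π / 2))]
  rw [← mul_assoc, show 1 / (2 * π) * (2 * (π / 2)) = 1 / 2 by field_simp]
  congr 1
  refine tsum_congr fun m => ?_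
  rw [invSqrtCoeff, invSqrtCoeff]
  ring
end

section
/- For 0 ≤ x < 1 and nonnegative integer k, the functions Ξ₁^{[k]} satisfy the differential-difference relation (x d/dx + 1/2)(Ξ₁^{[k]}(x) + Ξ₁^{[k+2]}(x)) = ((1+x²) d/dx + x) Ξ₁^{[k+1]}(x). -/
open Real

/-!
Write `D(x, θ) = |1 - x e^{iθ}|² = 1 + x² - 2 x cos θ`. For `|x| < 1` the kernel `D^{-1/2}` is
smooth in `x`, with `∂ₓ D^{-1/2} = (cos θ - x) D^{-3/2}` bounded uniformly on `|x| ≤ r < 1`, so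
`Ξ₁^{[k]}` may be differentiated under the integral sign. Since
`cos kθ + cos (k+2)θ = 2 cos θ cos (k+1)θ`, both sides of the relation become integrals of
`cos (k+1)θ · N(θ) D^{-3/2}`, and the two numerators `N` both reduce to `(1 - x²) cos θ`.
-/

open Filter Topology MeasureTheory

noncomputable section

/-- `|1 - x e^{iθ}|²`. -/
def chordSq (x θ : ℝ) : ℝ := 1 + x ^ 2 - 2 * x * cos θ

def invSqrtChordIntegral (g : ℝ → ℝ) (x : ℝ) : ℝ := ∫ θ in (0:ℝ)..π, g θ / √(chordSq x θ)

lemma continuous_chordSq (x : ℝ) : Continuous (chordSq x) := by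
  unfold chordSq; fun_prop

lemma sq_one_sub_abs_le_chordSq (x θ : ℝ) : (1 - |x|) ^ 2 ≤ chordSq x θ := by
  have : x * cos θ ≤ |x| := (le_abs_self _).trans <| by
    rw [abs_mul]; exact mul_le_of_le_one_right (abs_nonneg x) (abs_cos_le_one θ)
  unfold chordSq
  nlinarith [sq_abs x]

lemma chordSq_pos {x : ℝ} (hx : |x| < 1) (θ : ℝ) : 0 < chordSq x θ :=
  (pow_pos (sub_pos.2 hx) 2).trans_le (sq_one_sub_abs_le_chordSq x θ)

lemma continuous_div_sqrt_chordSq {g : ℝ → ℝ} (hg : Continuous g) {x : ℝ} (hx : |x| < 1) :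
    Continuous fun θ => g θ / √(chordSq x θ) :=
  hg.div (continuous_chordSq x).sqrt fun θ => (sqrt_pos.2 (chordSq_pos hx θ)).ne'

lemma continuous_mul_cos_sub_div_chordSq_mul_sqrt {g : ℝ → ℝ} (hg : Continuous g) {x : ℝ}
    (hx : |x| < 1) :
    Continuous fun θ => g θ * (cos θ - x) / (chordSq x θ * √(chordSq x θ)) :=
  (hg.mul (continuous_cos.sub continuous_const)).div
    ((continuous_chordSq x).mul (continuous_chordSq x).sqrt) fun θ =>
      (mul_pos (chordSq_pos hx θ) (sqrt_pos.2 (chordSq_pos hx θ))).ne'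

lemma hasDerivAt_div_sqrt_chordSq (a θ : ℝ) {x : ℝ} (hx : |x| < 1) :
    HasDerivAt (fun y => a / √(chordSq y θ))
      (a * (cos θ - x) / (chordSq x θ * √(chordSq x θ))) x := by
  have hD := chordSq_pos hx θ
  have hchord : HasDerivAt (chordSq · θ) (2 * x - 2 * cos θ) x := by
    have h : (chordSq · θ) = fun y => 1 + y ^ 2 - y * (2 * cos θ) := by
      funext y; simp only [chordSq]; ring
    rw [h]
    exact (((hasDerivAt_pow 2 x).const_add 1).fun_sub
      ((hasDerivAt_id' x).mul_const _)).congr_deriv (by norm_num)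
  refine ((hasDerivAt_const x a).div (hchord.sqrt hD.ne') (sqrt_pos.2 hD).ne').congr_deriv ?_
  have hs : √(chordSq x θ) ^ 2 = chordSq x θ := sq_sqrt hD.le
  set s := √(chordSq x θ)
  rw [← hs]
  field_simp
  ring

lemma norm_cos_sub_div_chordSq_mul_sqrt_le {r y : ℝ} (hr : r < 1) (hy : |y| ≤ r) (θ : ℝ) :
    ‖(cos θ - y) / (chordSq y θ * √(chordSq y θ))‖ ≤ 2 / (1 - r) ^ 3 := by
  have hr0 : 0 < 1 - r := sub_pos.2 hr
  have hD : (1 - r) ^ 2 ≤ chordSq y θ :=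
    (pow_le_pow_left₀ hr0.le (by linarith) 2).trans (sq_one_sub_abs_le_chordSq y θ)
  have hD0 : 0 ≤ chordSq y θ := (sq_nonneg _).trans hD
  have hs : 1 - r ≤ √(chordSq y θ) := (le_sqrt hr0.le hD0).2 hD
  have hnum : |cos θ - y| ≤ 2 :=
    (abs_sub _ _).trans (by linarith [abs_cos_le_one θ, abs_nonneg y])
  rw [norm_div, norm_mul, Real.norm_eq_abs, Real.norm_of_nonneg hD0,
    Real.norm_of_nonneg (sqrt_nonneg _), pow_succ]
  exact div_le_div₀ (by norm_num) hnum (by positivity) (mul_le_mul hD hs hr0.le hD0)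

lemma hasDerivAt_invSqrtChordIntegral {g : ℝ → ℝ} (hg : Continuous g) {x : ℝ}
    (hx : |x| < 1) :
    HasDerivAt (invSqrtChordIntegral g)
      (∫ θ in (0:ℝ)..π, g θ * (cos θ - x) / (chordSq x θ * √(chordSq x θ))) x := by
  obtain ⟨M, hM⟩ := isCompact_Icc.exists_bound_of_continuousOn (hg.continuousOn (s := Set.Icc 0 π))
  have hM0 : 0 ≤ M := (norm_nonneg _).trans (hM 0 ⟨le_rfl, pi_pos.le⟩)
  set r := (1 + |x|) / 2 with hr_def
  have hr : r < 1 := by linarith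
  set U := Metric.ball x ((1 - |x|) / 2)
  have hU : U ∈ 𝓝 x := Metric.ball_mem_nhds x (by linarith)
  have hU_le : ∀ y ∈ U, |y| ≤ r := fun y hy => by
    rw [Metric.mem_ball, dist_eq] at hy
    linarith [abs_sub_abs_le_abs_sub y x]
  refine (intervalIntegral.hasDerivAt_integral_of_dominated_loc_of_deriv_le
    (F := fun y θ => g θ / √(chordSq y θ))
    (F' := fun y θ => g θ * (cos θ - y) / (chordSq y θ * √(chordSq y θ)))
    (bound := fun _ => M * (2 / (1 - r) ^ 3)) hU ?_ ?_ ?_ ?_ intervalIntegrable_const ?_).2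
  · filter_upwards [hU] with y hy
    exact (continuous_div_sqrt_chordSq hg ((hU_le y hy).trans_lt hr)).aestronglyMeasurable
  · exact (continuous_div_sqrt_chordSq hg hx).intervalIntegrable _ _
  · exact (continuous_mul_cos_sub_div_chordSq_mul_sqrt hg hx).aestronglyMeasurable
  · refine ae_of_all _ fun θ hθ y hy => ?_
    rw [Set.uIoc_of_le pi_pos.le] at hθ
    rw [mul_div_assoc, norm_mul]
    exact mul_le_mul (hM θ (Set.Ioc_subset_Icc_self hθ))
      (norm_cos_sub_div_chordSq_mul_sqrt_le hr (hU_le y hy) θ) (norm_nonneg _) hM0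
  · exact ae_of_all _ fun θ _ y hy =>
      hasDerivAt_div_sqrt_chordSq (g θ) θ ((hU_le y hy).trans_lt hr)

lemma mul_deriv_add_mul_invSqrtChordIntegral {g : ℝ → ℝ} (hg : Continuous g) {x : ℝ}
    (hx : |x| < 1) (α β : ℝ) :
    α * deriv (invSqrtChordIntegral g) x + β * invSqrtChordIntegral g x =
      ∫ θ in (0:ℝ)..π,
        g θ * (α * (cos θ - x) + β * chordSq x θ) / (chordSq x θ * √(chordSq x θ)) := by
  have hint₁ : IntervalIntegrable
      (fun θ => α * (g θ * (cos θ - x) / (chordSq x θ * √(chordSq x θ)))) volume 0 π :=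
    ((continuous_mul_cos_sub_div_chordSq_mul_sqrt hg hx).const_mul α).intervalIntegrable _ _
  have hint₂ : IntervalIntegrable (fun θ => β * (g θ / √(chordSq x θ))) volume 0 π :=
    ((continuous_div_sqrt_chordSq hg hx).const_mul β).intervalIntegrable _ _
  rw [(hasDerivAt_invSqrtChordIntegral hg hx).deriv, invSqrtChordIntegral,
    ← intervalIntegral.integral_const_mul, ← intervalIntegral.integral_const_mul,
    ← intervalIntegral.integral_add hint₁ hint₂]
  refine intervalIntegral.integral_congr fun θ _ => ?_
  have hD := chordSq_pos hx θ
  have hs := sqrt_pos.2 hD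
  field_simp

lemma cos_mul_add_cos_add_two_mul (a θ : ℝ) :
    cos (a * θ) + cos ((a + 2) * θ) = 2 * cos θ * cos ((a + 1) * θ) := by
  rw [cos_add_cos, show (a * θ - (a + 2) * θ) / 2 = -θ by ring, cos_neg,
    show (a * θ + (a + 2) * θ) / 2 = (a + 1) * θ by ring]
  ring

lemma Xi1_eq_invSqrtChordIntegral (k : ℕ) (x : ℝ) :
    Xi1 k x = 1 / (2 * π) * invSqrtChordIntegral (fun θ => cos (k * θ)) x :=
  rfl

lemma Xi1_add_Xi1_add_two (k : ℕ) {x : ℝ} (hx : |x| < 1) :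
    Xi1 k x + Xi1 (k + 2) x = 1 / (2 * π) *
      invSqrtChordIntegral (fun θ => 2 * cos θ * cos (((k + 1 : ℕ) : ℝ) * θ)) x := by
  have hint : ∀ j : ℕ, IntervalIntegrable (fun θ => cos (j * θ) / √(chordSq x θ)) volume 0 π :=
    fun j => (continuous_div_sqrt_chordSq (by fun_prop) hx).intervalIntegrable _ _
  rw [Xi1_eq_invSqrtChordIntegral, Xi1_eq_invSqrtChordIntegral, invSqrtChordIntegral,
    invSqrtChordIntegral, ← mul_add, ← intervalIntegral.integral_add (hint k) (hint (k + 2))]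
  congr 1
  refine intervalIntegral.integral_congr fun θ _ => ?_
  simp only [← add_div, chordSq]
  push_cast
  rw [cos_mul_add_cos_add_two_mul]

end

theorem Xi1_diff_difference (k : ℕ) (x : ℝ) (hx0 : 0 ≤ x) (hx1 : x < 1) :
    x * deriv (fun t : ℝ => Xi1 k t + Xi1 (k + 2) t) x
        + (1 / 2) * (Xi1 k x + Xi1 (k + 2) x) =
      (1 + x ^ 2) * deriv (Xi1 (k + 1)) x + x * Xi1 (k + 1) x := by
  have hx : |x| < 1 := abs_lt.2 ⟨by linarith, hx1⟩
  set g : ℝ → ℝ := fun θ => cos (((k + 1 : ℕ) : ℝ) * θ)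
  set g₂ : ℝ → ℝ := fun θ => 2 * cos θ * g θ
  have hg : Continuous g := by fun_prop
  have hg₂ : Continuous g₂ := by fun_prop
  have hsum : (fun t => Xi1 k t + Xi1 (k + 2) t) =ᶠ[𝓝 x]
      fun t => 1 / (2 * π) * invSqrtChordIntegral g₂ t := by
    filter_upwards [(isOpen_lt continuous_abs continuous_const).mem_nhds hx] with t ht
    exact Xi1_add_Xi1_add_two k ht
  have hXi : Xi1 (k + 1) = fun t => 1 / (2 * π) * invSqrtChordIntegral g t :=
    funext (Xi1_eq_invSqrtChordIntegral (k + 1))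
  rw [hsum.deriv_eq, hsum.eq_of_nhds, hXi,
    deriv_const_mul _ (hasDerivAt_invSqrtChordIntegral hg₂ hx).differentiableAt,
    deriv_const_mul _ (hasDerivAt_invSqrtChordIntegral hg hx).differentiableAt]
  have key : x * deriv (invSqrtChordIntegral g₂) x + 1 / 2 * invSqrtChordIntegral g₂ x =
      (1 + x ^ 2) * deriv (invSqrtChordIntegral g) x + x * invSqrtChordIntegral g x := by
    rw [mul_deriv_add_mul_invSqrtChordIntegral hg₂ hx,
      mul_deriv_add_mul_invSqrtChordIntegral hg hx]
    refine intervalIntegral.integral_congr fun θ _ => ?_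
    simp only [g₂, chordSq]
    ring
  linear_combination 1 / (2 * π) * key
end

section
/- Let n be a nonnegative integer and a₁,a₂,a₃,b₁,b₂,b₃ parameters (with b-parameters not nonpositive integers) such that the series ₄F₃(−n, A, B, C; E, F, G; 1) is balanced, i.e., −n + A + B + C + 1 = E + F + G. Then ₄F₃(−n, A, B, C; E, F, G; 1) = [(F−C)_n (G−C)_n / ((F)_n (G)_n)] · ₄F₃(−n, E−A, E−B, C; E, E+F−A−B, E+G−A−B; 1). -/
/-- The terminating hypergeometric sum ₄F₃(−n, A, B, C; E, F, G; 1). -/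
noncomputable def term4F3 (n : ℕ) (A B C E F G : ℝ) : ℝ :=
  ∑ j ∈ Finset.range (n + 1),
    rising (-(n : ℝ)) j * rising A j * rising B j * rising C j /
      (rising E j * rising F j * rising G j * (j.factorial : ℝ))

open Finset Polynomial

section CommRing

variable {R : Type*} [CommRing R]

theorem neg_one_pow_sub_of_le {j k : ℕ} (h : k ≤ j) :
    (-1 : R) ^ (j - k) = (-1) ^ j * (-1) ^ k := by
  rw [← pow_mul_pow_sub (-1 : R) h, mul_comm, ← mul_assoc, ← mul_pow, neg_one_mul, neg_neg,
    one_pow, one_mul]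

theorem ascPochhammer_add_eval (x : R) (k m : ℕ) :
    (ascPochhammer R (k + m)).eval x =
      (ascPochhammer R k).eval x * (ascPochhammer R m).eval (x + k) := by
  rw [← ascPochhammer_mul, eval_mul, eval_comp, eval_add, eval_X, eval_natCast]

theorem ascPochhammer_eval_eq_mul_of_le (x : R) {k n : ℕ} (h : k ≤ n) :
    (ascPochhammer R n).eval x =
      (ascPochhammer R k).eval x * (ascPochhammer R (n - k)).eval (x + k) := by
  rw [← ascPochhammer_add_eval, Nat.add_sub_cancel' h]

theorem ascPochhammer_eval_reflect (x : R) (m : ℕ) :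
    (ascPochhammer R m).eval x = (-1) ^ m * (ascPochhammer R m).eval (1 - x - m) := by
  conv_lhs => rw [← neg_neg x, ascPochhammer_eval_neg_eq_descPochhammer,
    descPochhammer_eval_eq_ascPochhammer]
  ring_nf

theorem ascPochhammer_eval_mul_eval_reflect (x y : R) (n : ℕ) :
    (ascPochhammer R n).eval x * (ascPochhammer R n).eval y =
      (ascPochhammer R n).eval (1 - x - n) * (ascPochhammer R n).eval (1 - y - n) := by
  have hsq : (-1 : R) ^ n * (-1) ^ n = 1 := by rw [← mul_pow]; norm_num
  rw [ascPochhammer_eval_reflect x, ascPochhammer_eval_reflect y]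
  linear_combination
    (ascPochhammer R n).eval (1 - x - n) * (ascPochhammer R n).eval (1 - y - n) * hsq

theorem ascPochhammer_eval_neg_natCast (n j : ℕ) :
    (ascPochhammer R j).eval (-(n : R)) = (-1) ^ j * n.choose j * j.factorial := by
  rw [ascPochhammer_eval_neg_eq_descPochhammer, descPochhammer_eval_eq_descFactorial,
    Nat.descFactorial_eq_factorial_mul_choose]
  push_cast
  ring

theorem ascPochhammer_eval_ne_zero [IsDomain R] {x : R}
    (h : ∀ m : ℕ, x ≠ -m) (n : ℕ) : (ascPochhammer R n).eval x ≠ 0 := by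
  rw [Ne, ascPochhammer_eval_eq_zero_iff]
  rintro ⟨k, -, hk⟩
  exact h k (by rw [hk, neg_neg])

theorem ascPochhammer_chu_vandermonde (M : ℕ) (x y : R) :
    ∑ k ∈ range (M + 1), (-1) ^ k * (M.choose k : R) * (ascPochhammer R k).eval x *
        (ascPochhammer R (M - k)).eval (y + k) = (ascPochhammer R M).eval (y - x) := by
  have desc_eval (r : R) (n : ℕ) :
      (descPochhammer ℤ n).smeval r = (ascPochhammer R n).eval (r - n + 1) := by
    rw [← aeval_eq_smeval, aeval_def, ← eval_map, descPochhammer_map,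
      descPochhammer_eval_eq_ascPochhammer]
  have hvand := Ring.descPochhammer_smeval_add M (Commute.all (-x) (y + M - 1))
  simp only [Nat.sum_antidiagonal_eq_sum_range_succ_mk, desc_eval] at hvand
  rw [show y - x = -x + (y + M - 1) - M + 1 by ring, hvand]
  refine sum_congr rfl fun k hk => ?_
  have hkM : k ≤ M := Nat.lt_succ_iff.mp (mem_range.mp hk)
  rw [ascPochhammer_eval_reflect (-x - k + 1), Nat.cast_sub hkM]
  ring_nf

theorem sum_neg_one_pow_mul_choose_sum_choose (N : ℕ) (f : ℕ → ℕ → R) :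
    ∑ j ∈ range (N + 1), (-1) ^ j * (N.choose j : R) *
        ∑ k ∈ range (j + 1), (j.choose k : R) * f j k =
      ∑ k ∈ range (N + 1), (-1) ^ k * (N.choose k : R) *
        ∑ m ∈ range (N - k + 1), (-1) ^ m * ((N - k).choose m : R) * f (k + m) k := by
  simp only [mul_sum]
  rw [sum_comm' (t' := range (N + 1)) (s' := fun k => Ico k (N + 1))]
  · refine sum_congr rfl fun k hk => ?_
    rw [sum_Ico_eq_sum_range, Nat.sub_add_comm (Nat.lt_succ_iff.mp (mem_range.mp hk))]
    refine sum_congr rfl fun m _ => ?_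
    have hchoose : (N.choose (k + m) : R) * (k + m).choose k = N.choose k * (N - k).choose m := by
      have := Nat.choose_mul (n := N) (Nat.le_add_right k m)
      rw [Nat.add_sub_cancel_left] at this
      rw [← Nat.cast_mul, ← Nat.cast_mul, this]
    linear_combination (-1) ^ (k + m) * f (k + m) k * hchoose
  · intro j k
    simp only [mem_range, mem_Ico]
    omega

theorem ascPochhammer_pfaff_saalschutz (N : ℕ) {a b c d : R} (h : c + d = 1 + a + b - N) :
    ∑ k ∈ range (N + 1), (-1) ^ k * (N.choose k : R) * (ascPochhammer R k).eval a *
        (ascPochhammer R k).eval b * (ascPochhammer R (N - k)).eval (c + k) *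
        (ascPochhammer R (N - k)).eval (d + k) =
      (-1) ^ N * (ascPochhammer R N).eval (c - a) * (ascPochhammer R N).eval (c - b) := by
  set f : ℕ → ℕ → R := fun k i => (-1) ^ i * (ascPochhammer R i).eval (c - a) *
    (ascPochhammer R (k - i)).eval (c + i) * (ascPochhammer R k).eval b *
    (ascPochhammer R (N - k)).eval (c + k) * (ascPochhammer R (N - k)).eval (d + k) with hf
  have expand (k : ℕ) : (-1) ^ k * (N.choose k : R) * (ascPochhammer R k).eval a *
        (ascPochhammer R k).eval b * (ascPochhammer R (N - k)).eval (c + k) *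
        (ascPochhammer R (N - k)).eval (d + k) =
      (-1) ^ k * (N.choose k : R) * ∑ i ∈ range (k + 1), (k.choose i : R) * f k i := by
    rw [show a = c - (c - a) by ring, ← ascPochhammer_chu_vandermonde k (c - a) c]
    simp only [hf, sum_mul, mul_sum]
    refine sum_congr rfl fun i _ => ?_
    ring
  have inner (i : ℕ) (hi : i ≤ N) :
      ∑ m ∈ range (N - i + 1), (-1) ^ m * ((N - i).choose m : R) * f (i + m) i =
        (-1) ^ N * (ascPochhammer R N).eval (c - a) *
          ((ascPochhammer R i).eval b * (ascPochhammer R (N - i)).eval (c + i)) := by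
    have hterm (m : ℕ) (hm : m ∈ range (N - i + 1)) :
        (-1) ^ m * ((N - i).choose m : R) * f (i + m) i =
        (-1) ^ i * (ascPochhammer R i).eval (c - a) * (ascPochhammer R i).eval b *
          (ascPochhammer R (N - i)).eval (c + i) *
          ((-1) ^ m * ((N - i).choose m : R) * (ascPochhammer R m).eval (b + i) *
            (ascPochhammer R (N - i - m)).eval (d + i + m)) := by
      have hm' : m ≤ N - i := Nat.lt_succ_iff.mp (mem_range.mp hm)
      simp only [hf, Nat.add_sub_cancel_left, ascPochhammer_add_eval b i m,
        ascPochhammer_eval_eq_mul_of_le (c + i) hm', ← Nat.sub_sub, Nat.cast_add, ← add_assoc]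
      ring
    rw [sum_congr rfl hterm, ← mul_sum, ascPochhammer_chu_vandermonde,
      ascPochhammer_eval_reflect (d + i - (b + i)),
      ascPochhammer_eval_eq_mul_of_le (c - a) hi,
      show 1 - (d + i - (b + i)) - ((N - i : ℕ) : R) = c - a + i by
        rw [Nat.cast_sub hi]; linear_combination -h]
    have hsign : (-1 : R) ^ i * (-1) ^ (N - i) = (-1) ^ N := by
      rw [← pow_add, Nat.add_sub_cancel' hi]
    linear_combination (ascPochhammer R i).eval (c - a) * (ascPochhammer R i).eval b *
      (ascPochhammer R (N - i)).eval (c + i) * (ascPochhammer R (N - i)).eval (c - a + i) * hsign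
  rw [sum_congr rfl fun k _ => expand k, sum_neg_one_pow_mul_choose_sum_choose,
    sum_congr rfl fun i hi => by rw [inner i (Nat.lt_succ_iff.mp (mem_range.mp hi))],
    ← ascPochhammer_chu_vandermonde N b c, mul_sum]
  refine sum_congr rfl fun i _ => ?_
  ring

theorem ascPochhammer_eval_mul_eval_eq_sum (j : ℕ) (A B E : R) :
    (ascPochhammer R j).eval A * (ascPochhammer R j).eval B =
      ∑ k ∈ range (j + 1), (j.choose k : R) * (ascPochhammer R k).eval (E - A) *
        (ascPochhammer R k).eval (E - B) * (ascPochhammer R (j - k)).eval (E + k) *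
        (ascPochhammer R (j - k)).eval (A + B - E) := by
  have hsaal := ascPochhammer_pfaff_saalschutz j (a := E - A) (b := E - B) (c := E)
    (d := 1 + E - A - B - j) (by ring)
  rw [sub_sub_cancel, sub_sub_cancel] at hsaal
  have hterm (k : ℕ) (hk : k ∈ range (j + 1)) :
      (j.choose k : R) * (ascPochhammer R k).eval (E - A) * (ascPochhammer R k).eval (E - B) *
          (ascPochhammer R (j - k)).eval (E + k) * (ascPochhammer R (j - k)).eval (A + B - E) =
        (-1) ^ j * ((-1) ^ k * (j.choose k : R) * (ascPochhammer R k).eval (E - A) *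
          (ascPochhammer R k).eval (E - B) * (ascPochhammer R (j - k)).eval (E + k) *
          (ascPochhammer R (j - k)).eval (1 + E - A - B - j + k)) := by
    have hkj : k ≤ j := Nat.lt_succ_iff.mp (mem_range.mp hk)
    rw [ascPochhammer_eval_reflect (A + B - E), neg_one_pow_sub_of_le hkj,
      show 1 - (A + B - E) - ((j - k : ℕ) : R) = 1 + E - A - B - j + k by
        rw [Nat.cast_sub hkj]; ring]
    ring
  have hsq : (-1 : R) ^ j * (-1) ^ j = 1 := by rw [← mul_pow]; norm_num
  rw [sum_congr rfl hterm, ← mul_sum, hsaal]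
  linear_combination -((ascPochhammer R j).eval A * (ascPochhammer R j).eval B) * hsq

/-- `(E)ₙ (F)ₙ (G)ₙ · ₄F₃(-n, A, B, C; E, F, G; 1)`, written without division. -/
noncomputable def clearedTerm4F3 (n : ℕ) (A B C E F G : R) : R :=
  ∑ j ∈ range (n + 1), (-1) ^ j * (n.choose j : R) * (ascPochhammer R j).eval A *
    (ascPochhammer R j).eval B * (ascPochhammer R j).eval C *
    (ascPochhammer R (n - j)).eval (E + j) * (ascPochhammer R (n - j)).eval (F + j) *
    (ascPochhammer R (n - j)).eval (G + j)

theorem clearedTerm4F3_transformation (n : ℕ) {A B C E F G : R}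
    (hbal : -(n : R) + A + B + C + 1 = E + F + G) :
    clearedTerm4F3 n A B C E F G =
      clearedTerm4F3 n (E - A) (E - B) C E (E + F - A - B) (E + G - A - B) := by
  set f : ℕ → ℕ → R := fun j k => (ascPochhammer R k).eval (E - A) *
    (ascPochhammer R k).eval (E - B) * (ascPochhammer R (j - k)).eval (E + k) *
    (ascPochhammer R (j - k)).eval (A + B - E) * (ascPochhammer R j).eval C *
    (ascPochhammer R (n - j)).eval (E + j) * (ascPochhammer R (n - j)).eval (F + j) *
    (ascPochhammer R (n - j)).eval (G + j) with hf
  have expand (j : ℕ) : (-1) ^ j * (n.choose j : R) * (ascPochhammer R j).eval A *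
      (ascPochhammer R j).eval B * (ascPochhammer R j).eval C *
      (ascPochhammer R (n - j)).eval (E + j) * (ascPochhammer R (n - j)).eval (F + j) *
      (ascPochhammer R (n - j)).eval (G + j) =
      (-1) ^ j * (n.choose j : R) * ∑ k ∈ range (j + 1), (j.choose k : R) * f j k := by
    rw [mul_assoc _ ((ascPochhammer R j).eval A), ascPochhammer_eval_mul_eval_eq_sum j A B E]
    simp only [hf, sum_mul, mul_sum]
    refine sum_congr rfl fun k _ => ?_
    ring
  have inner (k : ℕ) (hk : k ≤ n) :
      ∑ m ∈ range (n - k + 1), (-1) ^ m * ((n - k).choose m : R) * f (k + m) k =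
        (ascPochhammer R k).eval (E - A) * (ascPochhammer R k).eval (E - B) *
          (ascPochhammer R k).eval C * (ascPochhammer R (n - k)).eval (E + k) *
          (ascPochhammer R (n - k)).eval (E + F - A - B + k) *
          (ascPochhammer R (n - k)).eval (E + G - A - B + k) := by
    have hterm (m : ℕ) (hm : m ∈ range (n - k + 1)) :
        (-1) ^ m * ((n - k).choose m : R) * f (k + m) k =
        (ascPochhammer R k).eval (E - A) * (ascPochhammer R k).eval (E - B) *
          (ascPochhammer R k).eval C * (ascPochhammer R (n - k)).eval (E + k) *
          ((-1) ^ m * ((n - k).choose m : R) * (ascPochhammer R m).eval (C + k) *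
            (ascPochhammer R m).eval (A + B - E) *
            (ascPochhammer R (n - k - m)).eval (F + k + m) *
            (ascPochhammer R (n - k - m)).eval (G + k + m)) := by
      have hm' : m ≤ n - k := Nat.lt_succ_iff.mp (mem_range.mp hm)
      simp only [hf, Nat.add_sub_cancel_left, ascPochhammer_add_eval C k m,
        ascPochhammer_eval_eq_mul_of_le (E + k) hm', ← Nat.sub_sub, Nat.cast_add, ← add_assoc]
      ring
    have hsaal : (F + k) + (G + k) = 1 + (C + k) + (A + B - E) - ((n - k : ℕ) : R) := by
      rw [Nat.cast_sub hk]
      linear_combination -hbal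
    rw [sum_congr rfl hterm, ← mul_sum, ascPochhammer_pfaff_saalschutz (n - k) hsaal,
      ascPochhammer_eval_reflect (E + G - A - B + k),
      show 1 - (E + G - A - B + k) - ((n - k : ℕ) : R) = F + k - (C + k) by
        rw [Nat.cast_sub hk]; linear_combination hbal]
    ring_nf
  unfold clearedTerm4F3
  rw [sum_congr rfl fun j _ => expand j, sum_neg_one_pow_mul_choose_sum_choose]
  refine sum_congr rfl fun k hk => ?_
  rw [inner k (Nat.lt_succ_iff.mp (mem_range.mp hk))]
  ring

end CommRing

theorem term4F3_eq_clearedTerm4F3_div {n : ℕ} {A B C E F G : ℝ} (hE : rising E n ≠ 0)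
    (hF : rising F n ≠ 0) (hG : rising G n ≠ 0) :
    term4F3 n A B C E F G =
      clearedTerm4F3 n A B C E F G / (rising E n * rising F n * rising G n) := by
  unfold term4F3 clearedTerm4F3 rising at *
  rw [sum_div]
  refine sum_congr rfl fun j hj => ?_
  have hjn : j ≤ n := Nat.lt_succ_iff.mp (mem_range.mp hj)
  rw [ascPochhammer_eval_eq_mul_of_le E hjn] at hE ⊢
  rw [ascPochhammer_eval_eq_mul_of_le F hjn] at hF ⊢
  rw [ascPochhammer_eval_eq_mul_of_le G hjn] at hG ⊢
  obtain ⟨hE₁, hE₂⟩ := mul_ne_zero_iff.mp hE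
  obtain ⟨hF₁, hF₂⟩ := mul_ne_zero_iff.mp hF
  obtain ⟨hG₁, hG₂⟩ := mul_ne_zero_iff.mp hG
  rw [ascPochhammer_eval_neg_natCast]
  field_simp

theorem balanced_4F3_transformation (n : ℕ) (A B C E F G : ℝ)
    (hE : ∀ m : ℕ, E ≠ -(m : ℝ)) (hF : ∀ m : ℕ, F ≠ -(m : ℝ))
    (hG : ∀ m : ℕ, G ≠ -(m : ℝ))
    (hEF : ∀ m : ℕ, E + F - A - B ≠ -(m : ℝ))
    (hEG : ∀ m : ℕ, E + G - A - B ≠ -(m : ℝ))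
    (hbal : -(n : ℝ) + A + B + C + 1 = E + F + G) :
    term4F3 n A B C E F G =
      rising (F - C) n * rising (G - C) n / (rising F n * rising G n) *
        term4F3 n (E - A) (E - B) C E (E + F - A - B) (E + G - A - B) := by
  have hprod : rising (F - C) n * rising (G - C) n =
      rising (E + F - A - B) n * rising (E + G - A - B) n := by
    rw [mul_comm (rising (E + F - A - B) n), rising, rising, ascPochhammer_eval_mul_eval_reflect]
    congr 2 <;> linear_combination hbal
  have ne_zero {x : ℝ} (hx : ∀ m : ℕ, x ≠ -m) : rising x n ≠ 0 :=
    ascPochhammer_eval_ne_zero hx n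
  rw [term4F3_eq_clearedTerm4F3_div (ne_zero hE) (ne_zero hF) (ne_zero hG),
    term4F3_eq_clearedTerm4F3_div (ne_zero hE) (ne_zero hEF) (ne_zero hEG),
    ← clearedTerm4F3_transformation n hbal, hprod]
  field_simp [ne_zero hEF, ne_zero hEG]
end

section
/- For parameters a₁,a₂,a₃,b₁,b₂ and |y| < 1, with δ = y d/dy, the contiguous relation holds: [b₁b₂ + a₂(a₃−a₁)y + (b₂ + (a₃−a₁)y)δ] ₃F₂(a₁,a₂,a₃; b₁+1, b₂+1; y) = [a₂a₃(b₂−a₁+1)y/(b₂+1)] ₃F₂(a₁, a₂+1, a₃+1; b₁+1, b₂+2; y) + b₁b₂ ₃F₂(a₁, a₂, a₃−1; b₁, b₂; y). -/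
/-! Write `F`, `G`, `H` for the three series in the order they appear. The identity says that the
power series `b₁b₂F + b₂δF - b₁b₂H`, whose constant term vanishes, is `y` times the series
`a₂a₃(b₂-a₁+1)/(b₂+1)·G - (a₃-a₁)(a₂F + δF)`. Comparing coefficients of `yⁿ⁺¹`, every coefficient
involved is the `n`-th coefficient of `F` times a rational function of `n`, since the Pochhammer
symbols differ from those of `F` by a single factor; what remains is a rational identity in `n`.
Convergence and termwise differentiation for `|y| < 1` come from the ratio test, the ratio of
consecutive coefficients tending to `1`. -/

open Filter Topology

/-- Clausen's generalized hypergeometric series ₃F₂(a₁,a₂,a₃;b₁,b₂;y). -/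
noncomputable def clausen3F2 (a₁ a₂ a₃ b₁ b₂ y : ℝ) : ℝ :=
  ∑' n : ℕ, rising a₁ n * rising a₂ n * rising a₃ n /
    (rising b₁ n * rising b₂ n * n.factorial) * y ^ n

section RatioTest

variable {c ρ : ℕ → ℝ}

theorem summable_norm_mul_pow_of_ratio (hc : ∀ᶠ n in atTop, c (n + 1) = c n * ρ n)
    (hρ : Tendsto ρ atTop (𝓝 1)) {x : ℝ} (hx : |x| < 1) :
    Summable fun n => ‖c n * x ^ n‖ := by
  obtain ⟨r, hxr, hr1⟩ := exists_between hx
  have hlim : Tendsto (fun n => |ρ n| * |x|) atTop (𝓝 |x|) := by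
    simpa using hρ.abs.mul_const |x|
  refine summable_of_ratio_norm_eventually_le hr1 ?_
  filter_upwards [hc, hlim.eventually_lt_const hxr] with n hn hlt
  simp only [hn, norm_mul, norm_pow, Real.norm_eq_abs, abs_abs, pow_succ]
  calc |c n| * |ρ n| * (|x| ^ n * |x|) = |ρ n| * |x| * (|c n| * |x| ^ n) := by ring
    _ ≤ r * (|c n| * |x| ^ n) := by gcongr

theorem tendsto_add_div_add_natCast (a b : ℝ) :
    Tendsto (fun n : ℕ => (a + n) / (b + n)) atTop (𝓝 1) := by
  simpa using tendsto_add_mul_div_add_mul_atTop_nhds a b 1 one_ne_zero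

theorem summable_norm_natCast_mul_mul_pow_of_ratio (hc : ∀ᶠ n in atTop, c (n + 1) = c n * ρ n)
    (hρ : Tendsto ρ atTop (𝓝 1)) {x : ℝ} (hx : |x| < 1) :
    Summable fun n : ℕ => ‖(n : ℝ) * c n * x ^ n‖ := by
  have hc' : ∀ᶠ n in atTop, ((n + 1 : ℕ) : ℝ) * c (n + 1) = n * c n * ((1 + n) / n * ρ n) := by
    filter_upwards [hc, eventually_ne_atTop 0] with n hn hn0
    rw [hn]
    field_simp
    push_cast
    ring
  have hρ' : Tendsto (fun n : ℕ => (1 + n) / n * ρ n) atTop (𝓝 1) := by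
    simpa using (tendsto_add_div_add_natCast 1 0).mul hρ
  exact summable_norm_mul_pow_of_ratio (c := fun n : ℕ => n * c n) hc' hρ' hx

theorem hasDerivAt_tsum_mul_pow_of_ratio (hc : ∀ᶠ n in atTop, c (n + 1) = c n * ρ n)
    (hρ : Tendsto ρ atTop (𝓝 1)) {y : ℝ} (hy : |y| < 1) :
    HasDerivAt (fun x => ∑' n, c n * x ^ n) (∑' n, c n * (n * y ^ (n - 1))) y := by
  obtain ⟨r, hyr, hr1⟩ := exists_between hy
  have hr0 : 0 < r := (abs_nonneg y).trans_lt hyr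
  have hbound : ∀ n, ∀ x ∈ Metric.ball (0 : ℝ) r,
      ‖c n * (n * x ^ (n - 1))‖ ≤ ‖(n : ℝ) * c n * r ^ n‖ / r := by
    intro n x hx
    rw [mem_ball_zero_iff, Real.norm_eq_abs] at hx
    rcases n with _ | n
    · simp
    simp only [norm_mul, Real.norm_eq_abs, abs_pow, Nat.add_sub_cancel, abs_of_pos hr0,
      Nat.abs_cast, pow_succ, le_div_iff₀ hr0]
    calc |c (n + 1)| * ((n + 1 : ℕ) * |x| ^ n) * r
        = (n + 1 : ℕ) * |c (n + 1)| * (|x| ^ n * r) := by ring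
      _ ≤ (n + 1 : ℕ) * |c (n + 1)| * (r ^ n * r) := by gcongr
  refine hasDerivAt_tsum_of_isPreconnected
    ((summable_norm_natCast_mul_mul_pow_of_ratio hc hρ (by rwa [abs_of_pos hr0])).div_const r)
    Metric.isOpen_ball (convex_ball 0 r).isPreconnected
    (fun n x _ => (hasDerivAt_pow n x).const_mul (c n)) hbound (Metric.mem_ball_self hr0)
    (summable_norm_mul_pow_of_ratio hc hρ (by norm_num)).of_norm
    (by rwa [mem_ball_zero_iff, Real.norm_eq_abs])

theorem hasSum_mul_deriv_tsum_mul_pow_of_ratio (hc : ∀ᶠ n in atTop, c (n + 1) = c n * ρ n)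
    (hρ : Tendsto ρ atTop (𝓝 1)) {y : ℝ} (hy : |y| < 1) :
    HasSum (fun n : ℕ => (n : ℝ) * c n * y ^ n) (y * deriv (fun x => ∑' n, c n * x ^ n) y) := by
  rw [(hasDerivAt_tsum_mul_pow_of_ratio hc hρ hy).deriv, ← tsum_mul_left]
  have hterm : (fun n : ℕ => y * (c n * (n * y ^ (n - 1)))) =
      fun n : ℕ => (n : ℝ) * c n * y ^ n := by
    funext n
    rcases n with _ | n
    · simp
    · rw [Nat.add_sub_cancel, pow_succ]
      ring
  rw [hterm]
  exact (summable_norm_natCast_mul_mul_pow_of_ratio hc hρ hy).of_norm.hasSum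

end RatioTest

theorem eq_mul_of_hasSum_shift {R : Type*} [CommRing R] [TopologicalSpace R]
    [IsTopologicalRing R] [T2Space R] {P : ℕ → R} {y A B : R}
    (hA : HasSum (fun n => P n * y ^ n) A) (hB : HasSum (fun n => P (n + 1) * y ^ n) B)
    (h0 : P 0 = 0) : A = y * B := by
  have hA' := (hasSum_nat_add_iff' 1).mpr hA
  simp only [Finset.range_one, Finset.sum_singleton, h0, zero_mul, sub_zero] at hA'
  have hshift : (fun n => y * (P (n + 1) * y ^ n)) = fun n => P (n + 1) * y ^ (n + 1) := by
    funext n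
    ring
  exact hA'.unique (hshift ▸ hB.mul_left y)

theorem rising_succ_right (a : ℝ) (n : ℕ) : rising a (n + 1) = rising a n * (a + n) :=
  ascPochhammer_succ_eval n a

theorem rising_succ_left (a : ℝ) (n : ℕ) : rising a (n + 1) = a * rising (a + 1) n := by
  simp [rising, ascPochhammer_succ_left, Polynomial.eval_comp]

theorem mul_rising_add_one (a : ℝ) (n : ℕ) : a * rising (a + 1) n = rising a n * (a + n) := by
  rw [← rising_succ_left, rising_succ_right]

theorem rising_ne_zero {a : ℝ} (ha : ∀ m : ℕ, a ≠ -m) (n : ℕ) : rising a n ≠ 0 := by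
  intro h
  obtain ⟨k, -, hk⟩ := (ascPochhammer_eval_eq_zero_iff n a).1 h
  exact ha k (by linarith)

theorem add_one_ne_neg_natCast {a : ℝ} (ha : ∀ m : ℕ, a ≠ -m) (m : ℕ) : a + 1 ≠ -m := by
  intro h
  exact ha (m + 1) (by push_cast; linarith)

noncomputable def clausenCoeff (p q r s t : ℝ) (n : ℕ) : ℝ :=
  rising p n * rising q n * rising r n / (rising s n * rising t n * n.factorial)

theorem clausenCoeff_zero (p q r s t : ℝ) : clausenCoeff p q r s t 0 = 1 := by
  simp [clausenCoeff, rising]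

theorem clausenCoeff_succ (p q r s t : ℝ) (n : ℕ) :
    clausenCoeff p q r s t (n + 1) = clausenCoeff p q r s t n *
      ((p + n) / (s + n) * ((q + n) / (t + n)) * ((r + n) / (n + 1))) := by
  simp only [clausenCoeff, rising_succ_right, Nat.factorial_succ, Nat.cast_mul, div_mul_div_comm]
  congr 1 <;> push_cast <;> ring

theorem clausenCoeff_sub_one_succ (p q r s t : ℝ) (n : ℕ) :
    clausenCoeff p q (r - 1) s t (n + 1) =
      clausenCoeff p q r (s + 1) (t + 1) n * ((p + n) * (q + n) * (r - 1) / (s * t * (n + 1))) := by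
  rw [clausenCoeff, rising_succ_right p, rising_succ_right q, rising_succ_left (r - 1),
    sub_add_cancel, rising_succ_left s, rising_succ_left t, Nat.factorial_succ, clausenCoeff,
    div_mul_div_comm]
  congr 1 <;> push_cast <;> ring

theorem mul_mul_clausenCoeff_add_one (p q r s : ℝ) {t : ℝ} (ht : ∀ m : ℕ, t ≠ -m) (n : ℕ) :
    q * r * clausenCoeff p (q + 1) (r + 1) s (t + 1) n =
      t * (q + n) * (r + n) / (t + n) * clausenCoeff p q r s t n := by
  rcases eq_or_ne (rising s n) 0 with hs | hs
  · simp [clausenCoeff, hs]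
  have htn : t + n ≠ 0 := fun h => ht n (by linarith)
  have hT := rising_ne_zero ht n
  have hT' := rising_ne_zero (add_one_ne_neg_natCast ht) n
  have hlhs : q * r * clausenCoeff p (q + 1) (r + 1) s (t + 1) n =
      rising p n * (rising q n * (q + n)) * (rising r n * (r + n)) /
        (rising s n * rising (t + 1) n * n.factorial) := by
    rw [clausenCoeff, ← mul_rising_add_one q, ← mul_rising_add_one r]
    ring
  rw [hlhs, clausenCoeff, div_mul_div_comm, div_eq_div_iff (by positivity) (by positivity)]
  linear_combination (-(rising p n * rising q n * rising r n * (q + n) * (r + n) * rising s n *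
    n.factorial)) * mul_rising_add_one t n

theorem clausenCoeff_contiguous (a₁ a₂ a₃ : ℝ) {b₁ b₂ : ℝ} (hb₁ : ∀ m : ℕ, b₁ ≠ -m)
    (hb₂ : ∀ m : ℕ, b₂ ≠ -m) (n : ℕ) :
    (b₁ * b₂ + (n + 1) * b₂) * clausenCoeff a₁ a₂ a₃ (b₁ + 1) (b₂ + 1) (n + 1)
        - b₁ * b₂ * clausenCoeff a₁ a₂ (a₃ - 1) b₁ b₂ (n + 1) =
      a₂ * a₃ * (b₂ - a₁ + 1) / (b₂ + 1) * clausenCoeff a₁ (a₂ + 1) (a₃ + 1) (b₁ + 1) (b₂ + 2) n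
        - (a₃ - a₁) * (a₂ + n) * clausenCoeff a₁ a₂ a₃ (b₁ + 1) (b₂ + 1) n := by
  have he := mul_mul_clausenCoeff_add_one a₁ a₂ a₃ (b₁ + 1) (add_one_ne_neg_natCast hb₂) n
  rw [add_assoc b₂ 1 1, one_add_one_eq_two] at he
  have hb₁0 : b₁ ≠ 0 := by simpa using hb₁ 0
  have hb₂0 : b₂ ≠ 0 := by simpa using hb₂ 0
  have hb₂1 : b₂ + 1 ≠ 0 := by simpa using add_one_ne_neg_natCast hb₂ 0
  have hb₁n : b₁ + 1 + n ≠ 0 := fun h => hb₁ (n + 1) (by push_cast; linarith)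
  have hb₂n : b₂ + 1 + n ≠ 0 := fun h => hb₂ (n + 1) (by push_cast; linarith)
  rw [clausenCoeff_succ, clausenCoeff_sub_one_succ]
  linear_combination (norm := skip) -(b₂ - a₁ + 1) / (b₂ + 1) * he
  field_simp
  ring

theorem tendsto_clausenCoeff_ratio (p q r s t : ℝ) :
    Tendsto (fun n : ℕ => (p + n) / (s + n) * ((q + n) / (t + n)) * ((r + n) / (n + 1))) atTop
      (𝓝 1) := by
  simpa [add_comm _ (1 : ℝ)] using ((tendsto_add_div_add_natCast p s).mul
    (tendsto_add_div_add_natCast q t)).mul (tendsto_add_div_add_natCast r 1)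

theorem hasSum_clausen3F2 (p q r s t : ℝ) {y : ℝ} (hy : |y| < 1) :
    HasSum (fun n => clausenCoeff p q r s t n * y ^ n) (clausen3F2 p q r s t y) :=
  (summable_norm_mul_pow_of_ratio (.of_forall (clausenCoeff_succ p q r s t))
    (tendsto_clausenCoeff_ratio p q r s t) hy).of_norm.hasSum

theorem hasSum_mul_deriv_clausen3F2 (p q r s t : ℝ) {y : ℝ} (hy : |y| < 1) :
    HasSum (fun n : ℕ => (n : ℝ) * clausenCoeff p q r s t n * y ^ n)
      (y * deriv (fun x => clausen3F2 p q r s t x) y) :=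
  hasSum_mul_deriv_tsum_mul_pow_of_ratio (.of_forall (clausenCoeff_succ p q r s t))
    (tendsto_clausenCoeff_ratio p q r s t) hy

theorem clausen3F2_contiguous_general (a₁ a₂ a₃ b₁ b₂ : ℝ)
    (hb₁ : ∀ m : ℕ, b₁ ≠ -(m : ℝ)) (hb₂ : ∀ m : ℕ, b₂ ≠ -(m : ℝ))
    (y : ℝ) (hy : |y| < 1) :
    (b₁ * b₂ + a₂ * (a₃ - a₁) * y) * clausen3F2 a₁ a₂ a₃ (b₁ + 1) (b₂ + 1) y
        + (b₂ + (a₃ - a₁) * y) *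
          (y * deriv (fun t : ℝ => clausen3F2 a₁ a₂ a₃ (b₁ + 1) (b₂ + 1) t) y) =
      a₂ * a₃ * (b₂ - a₁ + 1) * y / (b₂ + 1) *
          clausen3F2 a₁ (a₂ + 1) (a₃ + 1) (b₁ + 1) (b₂ + 2) y
        + b₁ * b₂ * clausen3F2 a₁ a₂ (a₃ - 1) b₁ b₂ y := by
  set F := clausen3F2 a₁ a₂ a₃ (b₁ + 1) (b₂ + 1) y
  set δF := y * deriv (fun t : ℝ => clausen3F2 a₁ a₂ a₃ (b₁ + 1) (b₂ + 1) t) y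
  set G := clausen3F2 a₁ (a₂ + 1) (a₃ + 1) (b₁ + 1) (b₂ + 2) y
  set H := clausen3F2 a₁ a₂ (a₃ - 1) b₁ b₂ y
  have hF : HasSum _ F := hasSum_clausen3F2 a₁ a₂ a₃ (b₁ + 1) (b₂ + 1) hy
  have hδF : HasSum _ δF := hasSum_mul_deriv_clausen3F2 a₁ a₂ a₃ (b₁ + 1) (b₂ + 1) hy
  have hG : HasSum _ G := hasSum_clausen3F2 a₁ (a₂ + 1) (a₃ + 1) (b₁ + 1) (b₂ + 2) hy
  have hH : HasSum _ H := hasSum_clausen3F2 a₁ a₂ (a₃ - 1) b₁ b₂ hy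
  let P : ℕ → ℝ := fun n => (b₁ * b₂ + n * b₂) * clausenCoeff a₁ a₂ a₃ (b₁ + 1) (b₂ + 1) n
    - b₁ * b₂ * clausenCoeff a₁ a₂ (a₃ - 1) b₁ b₂ n
  have hP : HasSum (fun n => P n * y ^ n) (b₁ * b₂ * F + b₂ * δF - b₁ * b₂ * H) :=
    (((hF.mul_left (b₁ * b₂)).add (hδF.mul_left b₂)).sub (hH.mul_left (b₁ * b₂))).congr_fun
      fun n => by ring
  have hPsucc : HasSum (fun n => P (n + 1) * y ^ n)
      (a₂ * a₃ * (b₂ - a₁ + 1) / (b₂ + 1) * G - (a₃ - a₁) * (a₂ * F + δF)) := by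
    refine ((hG.mul_left _).sub (((hF.mul_left a₂).add hδF).mul_left (a₃ - a₁))).congr_fun
      fun n => ?_
    simp only [P, Nat.cast_succ, clausenCoeff_contiguous a₁ a₂ a₃ hb₁ hb₂ n]
    ring
  linear_combination eq_mul_of_hasSum_shift hP hPsucc (by simp [P, clausenCoeff_zero])

theorem clausen3F2_contiguous (a₁ a₂ a₃ b₁ b₂ : ℝ)
    (hb₁ : ∀ m : ℕ, b₁ ≠ -(m : ℝ)) (hb₂ : ∀ m : ℕ, b₂ ≠ -(m : ℝ))
    (hb₁' : ∀ m : ℕ, b₁ + 1 ≠ -(m : ℝ)) (hb₂' : ∀ m : ℕ, b₂ + 1 ≠ -(m : ℝ))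
    (hb₂'' : ∀ m : ℕ, b₂ + 2 ≠ -(m : ℝ))
    (y : ℝ) (hy : |y| < 1) :
    (b₁ * b₂ + a₂ * (a₃ - a₁) * y) * clausen3F2 a₁ a₂ a₃ (b₁ + 1) (b₂ + 1) y
        + (b₂ + (a₃ - a₁) * y) *
          (y * deriv (fun t : ℝ => clausen3F2 a₁ a₂ a₃ (b₁ + 1) (b₂ + 1) t) y) =
      a₂ * a₃ * (b₂ - a₁ + 1) * y / (b₂ + 1) *
          clausen3F2 a₁ (a₂ + 1) (a₃ + 1) (b₁ + 1) (b₂ + 2) y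
        + b₁ * b₂ * clausen3F2 a₁ a₂ (a₃ - 1) b₁ b₂ y :=
  clausen3F2_contiguous_general a₁ a₂ a₃ b₁ b₂ hb₁ hb₂ y hy
end
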